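/- arXiv:1703.05967 — 3 statements merged into one kernel-verified Lean document; each statement's English description precedes it below -/
import Mathlib

section
/- The extended no broken circuit complex Δ^ENBC_{M,≺} is pure of dimension r+1: every facet F̄ = {y_i : i ∈ F} ∪ {x_j : j ∈ L(F)\F} ∪ {y_0} has exactly r+2 vertices, where F ranges over faces of the reduced no broken circuit complex and L(F) is the ≺-lex-maximal basis containing F. -/
open Set

/-- A circuit of a matroid: a minimal dependent set. -/
def Matroid.IsCircuit' {α : Type*} (M : Matroid α) (C : Set α) : Prop :=
  M.Dep C ∧ ∀ D ⊂ C, M.Indep D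

/-- A broken circuit: a circuit with its least element (in the natural order) removed. -/
def Matroid.IsBrokenCircuit {n : ℕ} (M : Matroid (Fin (n + 1))) (B : Set (Fin (n + 1))) : Prop :=
  ∃ C m, M.IsCircuit' C ∧ m ∈ C ∧ (∀ k ∈ C, m ≤ k) ∧ B = C \ {m}

/-- The rank of a set in a matroid: the largest size of an independent subset. -/
noncomputable def Matroid.rk' {α : Type*} (M : Matroid α) (S : Set α) : ℕ :=
  sSup {k | ∃ I, I ⊆ S ∧ M.Indep I ∧ I.ncard = k}

/-- A face of the reduced no broken circuit complex: a subset of `{1,…,n}` containing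
no broken circuit (such a set is automatically independent). -/
def RNBCface {n : ℕ} (M : Matroid (Fin (n + 1))) (F : Set (Fin (n + 1))) : Prop :=
  (0 : Fin (n + 1)) ∉ F ∧ (∀ B, M.IsBrokenCircuit B → ¬ B ⊆ F) ∧ M.Indep F

/-- The up-set `i↑` of `i` with respect to a second linear order `≺` (including `i` itself). -/
def upSet {n : ℕ} (prec : LinearOrder (Fin (n + 1))) (i : Fin (n + 1)) : Set (Fin (n + 1)) :=
  {j | prec.le i j}

/-- `L(F)`: the candidate `≺`-lexicographically maximal basis containing `F`, defined by
`i ∈ L(F)` iff `i ∈ F` or `rk(i↑ ∪ F) > rk((i↑ \ {i}) ∪ F)`. -/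
noncomputable def LSet {n : ℕ} (M : Matroid (Fin (n + 1))) (prec : LinearOrder (Fin (n + 1)))
    (F : Set (Fin (n + 1))) : Set (Fin (n + 1)) :=
  {i | i ∈ F ∨ M.rk' (upSet prec i ∪ F) > M.rk' ((upSet prec i \ {i}) ∪ F)}

/-- The facet `F̄` of the extended no broken circuit complex attached to a face `F` of the
reduced no broken circuit complex:  `{y_i : i ∈ F} ∪ {x_j : j ∈ L(F) \ F} ∪ {y_0}`,
with `x`-vertices encoded by `Sum.inl` and `y`-vertices by `Sum.inr`. -/
noncomputable def barFace {n : ℕ} (M : Matroid (Fin (n + 1))) (prec : LinearOrder (Fin (n + 1)))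
    (F : Set (Fin (n + 1))) : Set (Fin (n + 1) ⊕ Fin (n + 1)) :=
  (Sum.inr '' F) ∪ (Sum.inl '' (LSet M prec F \ F)) ∪ {Sum.inr 0}

/-- A face of the extended no broken circuit complex `Δ^ENBC_{M,≺}`: a subset of some
facet `F̄`. -/
noncomputable def ENBCface {n : ℕ} (M : Matroid (Fin (n + 1))) (prec : LinearOrder (Fin (n + 1)))
    (G : Set (Fin (n + 1) ⊕ Fin (n + 1))) : Prop :=
  ∃ F, RNBCface M F ∧ G ⊆ barFace M prec F

/-!
`L(F)` is what the greedy algorithm produces when it starts from `F` and scans the ground set in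
`≺`-decreasing order: the rank jump `rk(i↑ ∪ F) > rk((i↑ \ {i}) ∪ F)` says exactly that `i` is not
spanned by `F` together with the elements after it. By induction over the `≺`-upper sets `U`, the
elements of `L(F)` in `U` together with `F` form a basis of `U ∪ F`, so `L(F)` is a base of `M` and
has `r + 1` elements. The facet `F̄` has one vertex for each element of `L(F)`, plus `y₀`
(as `0 ∉ F`), hence `r + 2` vertices.
-/

namespace Matroid

variable {α : Type*} {M : Matroid α} {I X F : Set α} {e : α}

lemma IsBasis'.insert_isBasis'_insert (hI : M.IsBasis' I X) (he : e ∈ M.E \ M.closure X) :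
    M.IsBasis' (insert e I) (insert e X) := by
  have heI : e ∉ M.closure I := hI.closure_eq_closure ▸ he.2
  rw [isBasis'_iff_isBasis_inter_ground, insert_inter_of_mem he.1]
  exact hI.isBasis_inter_ground.insert_isBasis_insert_of_notMem_closure heI he.1

lemma IsBasis'.isBasis'_insert (hI : M.IsBasis' I X) (he : e ∉ M.E \ M.closure X) :
    M.IsBasis' I (insert e X) := by
  have hcl : M.closure (insert e X) = M.closure X := by
    by_cases heE : e ∈ M.E
    · exact closure_insert_eq_of_mem_closure (not_not.1 fun h => he ⟨heE, h⟩)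
    · rw [← closure_inter_ground, insert_inter_of_notMem heE, closure_inter_ground]
  rw [isBasis'_iff_isBasis_closure] at hI ⊢
  exact ⟨hcl ▸ hI.1, hI.2.trans (subset_insert e X)⟩

lemma rk'_eq_eRk [Finite α] (M : Matroid α) (X : Set α) : (M.rk' X : ℕ∞) = M.eRk X := by
  obtain ⟨I, hI⟩ := M.exists_isBasis' X
  have hmax : IsGreatest {k | ∃ J, J ⊆ X ∧ M.Indep J ∧ J.ncard = k} I.ncard := by
    refine ⟨⟨I, hI.subset, hI.indep, rfl⟩, ?_⟩
    rintro _ ⟨J, hJX, hJ, rfl⟩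
    have hle := hJ.encard_le_eRk_of_subset hJX
    rw [← hI.encard_eq_eRk, ← J.toFinite.cast_ncard_eq, ← I.toFinite.cast_ncard_eq] at hle
    exact_mod_cast hle
  rw [rk', hmax.csSup_eq, I.toFinite.cast_ncard_eq, hI.encard_eq_eRk]

lemma rk'_lt_rk'_insert_iff [Finite α] :
    M.rk' X < M.rk' (insert e X) ↔ e ∈ M.E \ M.closure X := by
  rw [← Nat.cast_lt (α := ℕ∞), rk'_eq_eRk, rk'_eq_eRk]
  refine ⟨fun hlt => ⟨?_, fun hcl => ?_⟩, fun he => ?_⟩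
  · by_contra heE
    rw [eRk_insert_of_notMem_ground X heE] at hlt
    exact hlt.false
  · rw [← eRk_insert_closure_eq, insert_eq_of_mem hcl, eRk_closure_eq] at hlt
    exact hlt.false
  · rw [eRk_insert_eq_add_one he, ← rk'_eq_eRk]
    exact_mod_cast Nat.lt_succ_self _

def lexMaxBase [LinearOrder α] (M : Matroid α) (F : Set α) : Set α :=
  F ∪ {i | i ∈ M.E \ M.closure (Ioi i ∪ F)}

lemma Indep.isBasis'_inter_union_of_isUpperSet [LinearOrder α] (hF : M.Indep F)
    {s : Finset α} (hs : IsUpperSet (s : Set α)) :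
    M.IsBasis' ({i | i ∈ M.E \ M.closure (Ioi i ∪ F)} ∩ s ∪ F) (s ∪ F) := by
  classical
  set J : Set α := {i | i ∈ M.E \ M.closure (Ioi i ∪ F)}
  induction s using Finset.induction_on_min with
  | empty => simpa using hF.isBasis_self.isBasis'
  | insert a s has ih =>
    rw [Finset.coe_insert] at hs ⊢
    have hsa : (s : Set α) = Ioi a := by
      ext x
      exact ⟨has x, fun hx => (hs hx.le (mem_insert a _)).resolve_left hx.ne'⟩
    specialize ih (hsa ▸ isUpperSet_Ioi a)
    rw [hsa] at ih ⊢
    rw [insert_union]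
    by_cases ha : a ∈ J
    · rw [inter_insert_of_mem ha, insert_union]
      exact ih.insert_isBasis'_insert ha
    · rw [inter_insert_of_notMem ha]
      exact ih.isBasis'_insert ha

lemma Indep.isBase_lexMaxBase [LinearOrder α] [Finite α] (hF : M.Indep F) :
    M.IsBase (M.lexMaxBase F) := by
  have := Fintype.ofFinite α
  have h := hF.isBasis'_inter_union_of_isUpperSet (s := Finset.univ) (by simp [isUpperSet_univ])
  rw [Finset.coe_univ, inter_univ, univ_union] at h
  rw [lexMaxBase, union_comm]
  simpa using h.isBasis_inter_ground

end Matroid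

lemma LSet_eq_lexMaxBase {n : ℕ} (M : Matroid (Fin (n + 1))) (prec : LinearOrder (Fin (n + 1)))
    (F : Set (Fin (n + 1))) : LSet M prec F = @Matroid.lexMaxBase _ prec M F := by
  ext i
  have hup : upSet prec i = @Ici _ prec.toPreorder i := rfl
  rw [LSet, Matroid.lexMaxBase, mem_ofPred_eq, mem_union, mem_ofPred_eq, gt_iff_lt, hup,
    @Ici_sdiff_left _ prec.toPartialOrder, ← @Ioi_insert _ prec.toPartialOrder, insert_union,
    Matroid.rk'_lt_rk'_insert_iff]

lemma Matroid.Indep.isBase_LSet {n : ℕ} {M : Matroid (Fin (n + 1))} {F : Set (Fin (n + 1))}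
    (hF : M.Indep F) (prec : LinearOrder (Fin (n + 1))) : M.IsBase (LSet M prec F) :=
  LSet_eq_lexMaxBase M prec F ▸ @Matroid.Indep.isBase_lexMaxBase _ _ _ prec _ hF

lemma ncard_barFace {n : ℕ} (M : Matroid (Fin (n + 1))) (prec : LinearOrder (Fin (n + 1)))
    {F : Set (Fin (n + 1))} (h0 : 0 ∉ F) :
    (barFace M prec F).ncard = (LSet M prec F).ncard + 1 := by
  have hFL : F ⊆ LSet M prec F := fun i hi => Or.inl hi
  have hdisj : Disjoint (Sum.inr '' F) (Sum.inl '' (LSet M prec F \ F)) := by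
    simp [disjoint_left]
  have h0' : Sum.inr 0 ∉ Sum.inr '' F ∪ Sum.inl '' (LSet M prec F \ F) := by
    simpa using h0
  rw [barFace, union_singleton, ncard_insert_of_notMem h0', ncard_union_eq hdisj,
    ncard_image_of_injective _ Sum.inr_injective, ncard_image_of_injective _ Sum.inl_injective,
    ncard_sdiff hFL, Nat.add_sub_cancel' (ncard_le_ncard hFL)]

theorem ENBC_pure_general {n r : ℕ} (M : Matroid (Fin (n + 1)))
    (prec : LinearOrder (Fin (n + 1)))
    (hrank : ∀ B : Set (Fin (n + 1)), M.IsBase B → B.ncard = r + 1)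
    (F : Set (Fin (n + 1))) (hF : RNBCface M F) :
    (barFace M prec F).ncard = r + 2 := by
  obtain ⟨h0, -, hFi⟩ := hF
  rw [ncard_barFace M prec h0, hrank _ (hFi.isBase_LSet prec)]

/-- the extended no broken circuit complex is pure of dimension `r+1`: every
facet `F̄ = {y_i : i ∈ F} ∪ {x_j : j ∈ L(F)\F} ∪ {y_0}` has exactly `r+2` vertices. -/
theorem ENBC_pure {n r : ℕ} (M : Matroid (Fin (n + 1)))
    (prec : LinearOrder (Fin (n + 1)))
    (hE : M.E = Set.univ)
    (hsimple : ∀ e f : Fin (n + 1), e ≠ f → M.Indep {e, f})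
    (hloopless : ∀ e : Fin (n + 1), M.Indep {e})
    (hrank : ∀ B : Set (Fin (n + 1)), M.IsBase B → B.ncard = r + 1)
    (F : Set (Fin (n + 1))) (hF : RNBCface M F) :
    (barFace M prec F).ncard = r + 2 :=
  ENBC_pure_general M prec hrank F hF
end

section
/- For a simple matroid M, the number of facets of the no broken circuit complex equals (−1)^{r+1} χ_M(0), i.e., the absolute value of the constant term of the characteristic polynomial. -/
open Set
open scoped Classical

/-- The characteristic polynomial of a matroid of rank `r+1` on `{0,…,n}`,
via the Whitney subset expansion `χ_M(q) = Σ_{S ⊆ E} (-1)^{|S|} q^{r+1-rk(S)}`. -/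
noncomputable def charPoly {n : ℕ} (M : Matroid (Fin (n + 1))) (r : ℕ) : Polynomial ℚ :=
  ∑ S ∈ (Finset.univ : Finset (Fin (n + 1))).powerset,
    (-1 : Polynomial ℚ) ^ S.card * Polynomial.X ^ (r + 1 - M.rk' (S : Set (Fin (n + 1))))

/-!
Evaluated at `q = 0`, the Whitney expansion of `χ_M` becomes the signed count `∑ (-1)^|S|` over
the spanning sets `S`. Call `e` spanned above `S` when `e` lies in the closure of the elements of
`S` larger than `e`. Toggling the least such element changes neither the closure of `S` nor the
set of such elements, so it is a sign-reversing involution. The surviving spanning sets, those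
with no element spanned above them, are exactly the NBC bases, i.e. the facets of the NBC complex,
and all of them have `r + 1` elements.
-/

namespace Finset

variable {α : Type*} [DecidableEq α]

def toggle (s : Finset α) (a : α) : Finset α :=
  if a ∈ s then s.erase a else insert a s

lemma toggle_toggle (s : Finset α) (a : α) : (s.toggle a).toggle a = s := by
  by_cases h : a ∈ s <;> simp [toggle, h]

lemma toggle_ne (s : Finset α) (a : α) : s.toggle a ≠ s := by
  by_cases h : a ∈ s <;> simp [toggle, h, Finset.ext_iff]

lemma neg_one_pow_card_toggle {R : Type*} [Monoid R] [HasDistribNeg R] (s : Finset α) (a : α) :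
    (-1 : R) ^ #(s.toggle a) = -(-1) ^ #s := by
  by_cases h : a ∈ s
  · rw [toggle, if_pos h, ← Finset.card_erase_add_one h, pow_succ, mul_neg_one, neg_neg]
  · rw [toggle, if_neg h, card_insert_of_notMem h, pow_succ, mul_neg_one]

lemma filter_toggle (p : α → Prop) [DecidablePred p] (s : Finset α) (a : α) :
    (s.toggle a).filter p = if p a then (s.filter p).toggle a else s.filter p := by
  by_cases h : a ∈ s <;> by_cases hp : p a <;> simp [toggle, h, hp, filter_erase, filter_insert]

lemma coe_toggle_subset (s : Finset α) (a : α) : (s.toggle a : Set α) ⊆ insert a ↑s := by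
  by_cases h : a ∈ s
  · simp only [toggle, if_pos h, coe_erase]
    exact Set.sdiff_subset.trans (Set.subset_insert _ _)
  · simp [toggle, h]

end Finset

namespace Matroid

open Finset

section General

variable {α : Type*} {M : Matroid α}

lemma isCircuit'_iff_isCircuit {C : Set α} : M.IsCircuit' C ↔ M.IsCircuit C := by
  rw [isCircuit_def, Set.minimal_iff_forall_ssubset, IsCircuit']
  refine and_congr_right fun hC => forall₂_congr fun D hDC => ?_
  rw [not_dep_iff (hDC.subset.trans hC.subset_ground)]

lemma closure_toggle [DecidableEq α] {X : Finset α} {e : α}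
    (he : e ∈ M.closure ↑(X.erase e)) :
    M.closure ↑(X.toggle e) = M.closure ↑X := by
  by_cases heX : e ∈ X
  · rw [Finset.toggle, if_pos heX, Finset.coe_erase] at *
    exact closure_sdiff_singleton_eq_closure he
  · rw [Finset.toggle, if_neg heX, Finset.coe_insert]
    rw [Finset.erase_eq_of_notMem heX] at he
    exact closure_insert_eq_of_mem_closure he

lemma le_rk'_iff_spanning [Finite α] {k : ℕ}
    (hrank : ∀ B, M.IsBase B → B.ncard = k) {S : Set α} (hSE : S ⊆ M.E) :
    k ≤ M.rk' S ↔ M.Spanning S := by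
  have hle : ∀ I, M.Indep I → I.ncard ≤ k := fun I hI => by
    obtain ⟨B, hB, hIB⟩ := hI.exists_isBase_superset
    exact hrank B hB ▸ Set.ncard_le_ncard hIB
  have hbdd : BddAbove {j | ∃ I, I ⊆ S ∧ M.Indep I ∧ I.ncard = j} := by
    refine ⟨k, ?_⟩
    rintro _ ⟨I, -, hI, rfl⟩
    exact hle I hI
  rw [spanning_iff_exists_isBase_subset hSE]
  constructor
  · intro hk
    have hmem : M.rk' S ∈ {j | ∃ I, I ⊆ S ∧ M.Indep I ∧ I.ncard = j} :=
      Nat.sSup_mem ⟨0, ∅, Set.empty_subset _, M.empty_indep, Set.ncard_empty _⟩ hbdd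
    obtain ⟨I, hIS, hI, hIcard⟩ := hmem
    obtain ⟨B, hB, hIB⟩ := hI.exists_isBase_superset
    have hIeq : I = B := Set.eq_of_subset_of_ncard_le hIB (by rw [hrank B hB, hIcard]; exact hk)
    exact ⟨B, hB, hIeq ▸ hIS⟩
  · rintro ⟨B, hB, hBS⟩
    exact le_csSup hbdd ⟨B, hBS, hB.indep, hrank B hB⟩

section SpannedAbove

variable [LinearOrder α] [Fintype α]

noncomputable def spannedAbove (M : Matroid α) (S : Finset α) : Finset α :=
  {e | e ∈ M.closure ↑({f ∈ S | e < f} : Finset α)}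

variable {S : Finset α} {e : α}

lemma mem_spannedAbove :
    e ∈ M.spannedAbove S ↔ e ∈ M.closure ↑({f ∈ S | e < f} : Finset α) := by
  simp [spannedAbove]

lemma closure_toggle_of_mem_spannedAbove (he : e ∈ M.spannedAbove S) :
    M.closure ↑(S.toggle e) = M.closure ↑S := by
  refine closure_toggle (M.closure_subset_closure ?_ (mem_spannedAbove.1 he))
  intro f hf
  simp only [Finset.coe_filter, Set.mem_ofPred_eq] at hf
  simp [hf.1, hf.2.ne']

lemma spannedAbove_toggle (he : e ∈ M.spannedAbove S) :
    M.spannedAbove (S.toggle e) = M.spannedAbove S := by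
  ext g
  simp only [mem_spannedAbove, Finset.filter_toggle]
  split_ifs with hge
  · rw [closure_toggle (M.closure_subset_closure ?_ (mem_spannedAbove.1 he))]
    intro f hf
    simp only [Finset.coe_filter, Set.mem_ofPred_eq] at hf
    simp [hf.1, hf.2.ne', hge.trans hf.2]
  · rfl

lemma Spanning.toggle (hS : M.Spanning ↑S) (he : e ∈ M.spannedAbove S) :
    M.Spanning ↑(S.toggle e) := by
  refine ⟨(closure_toggle_of_mem_spannedAbove he).trans hS.closure_eq, ?_⟩
  exact (Finset.coe_toggle_subset S e).trans
    (Set.insert_subset (mem_ground_of_mem_closure (mem_spannedAbove.1 he)) hS.subset_ground)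

/-- Toggling the least element of `spannedAbove` is a sign-reversing involution on the spanning
sets for which `spannedAbove` is nonempty. -/
lemma sum_spanning_neg_one_pow {R : Type*} [Ring R] (M : Matroid α) :
    ∑ S ∈ univ.filter (fun S : Finset α => M.Spanning ↑S), (-1 : R) ^ #S =
      ∑ S ∈ univ.filter (fun S : Finset α => M.Spanning ↑S ∧ M.spannedAbove S = ∅),
        (-1 : R) ^ #S := by
  rw [← sum_filter_add_sum_filter_not _ (fun S => M.spannedAbove S = ∅), filter_filter,
    add_eq_left]
  have hne : ∀ S ∈ (univ.filter (fun S : Finset α => M.Spanning ↑S)).filter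
      (¬ M.spannedAbove · = ∅), (M.spannedAbove S).Nonempty :=
    fun S hS => nonempty_iff_ne_empty.2 (mem_filter.1 hS).2
  have hinv : ∀ S h h', (M.spannedAbove (S.toggle ((M.spannedAbove S).min' h))).min' h' =
      (M.spannedAbove S).min' h := fun S h h' => by
    congr 1
    exact spannedAbove_toggle (min'_mem _ h)
  refine sum_involution (fun S hS => S.toggle ((M.spannedAbove S).min' (hne S hS)))
    (fun S _ => by rw [neg_one_pow_card_toggle, add_neg_cancel])
    (fun S _ _ => toggle_ne _ _) (fun S hS => ?_) (fun S hS => ?_)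
  · have he := min'_mem _ (hne S hS)
    simp only [mem_filter, Finset.mem_univ, true_and] at hS ⊢
    rw [spannedAbove_toggle he]
    exact ⟨hS.1.toggle he, hS.2⟩
  · rw [hinv, toggle_toggle]

end SpannedAbove

end General

section NBC

variable {n : ℕ} {M : Matroid (Fin (n + 1))}

def IsNBC (M : Matroid (Fin (n + 1))) (S : Set (Fin (n + 1))) : Prop :=
  ∀ B, M.IsBrokenCircuit B → ¬ B ⊆ S

lemma IsCircuit.isBrokenCircuit_sdiff {C : Set (Fin (n + 1))} {m : Fin (n + 1)}
    (hC : M.IsCircuit C) (hm : m ∈ C) (hmin : ∀ k ∈ C, m ≤ k) :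
    M.IsBrokenCircuit (C \ {m}) :=
  ⟨C, m, isCircuit'_iff_isCircuit.2 hC, hm, hmin, rfl⟩

lemma IsNBC.indep {S : Set (Fin (n + 1))} (hS : M.IsNBC S) (hSE : S ⊆ M.E) : M.Indep S := by
  by_contra hdep
  obtain ⟨C, hCS, hC⟩ := ((not_indep_iff hSE).1 hdep).exists_isCircuit_subset
  obtain ⟨m, hmC, hmin⟩ := Set.exists_min_image C id C.toFinite hC.nonempty
  exact hS _ (hC.isBrokenCircuit_sdiff hmC hmin) (Set.sdiff_subset.trans hCS)

lemma isNBC_of_spannedAbove_eq_empty {S : Finset (Fin (n + 1))} (h : M.spannedAbove S = ∅) :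
    M.IsNBC ↑S := by
  rintro _ ⟨C, m, hC, hmC, hmin, rfl⟩ hCS
  have hm : m ∈ M.spannedAbove S := by
    refine mem_spannedAbove.2 (M.closure_subset_closure (fun f hf => ?_)
      ((isCircuit'_iff_isCircuit.1 hC).mem_closure_sdiff_singleton_of_mem hmC))
    exact mem_filter.2 ⟨hCS hf, (hmin f hf.1).lt_of_ne (Ne.symm hf.2)⟩
  simp [h] at hm

lemma isBase_of_spannedAbove_eq_empty {S : Finset (Fin (n + 1))} (hS : M.Spanning ↑S)
    (h : M.spannedAbove S = ∅) : M.IsBase ↑S :=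
  hS.isBase_of_indep ((isNBC_of_spannedAbove_eq_empty h).indep hS.subset_ground)

lemma IsNBC.spannedAbove_eq_empty {S : Finset (Fin (n + 1))} (hS : M.IsNBC ↑S)
    (hSE : ↑S ⊆ M.E) : M.spannedAbove S = ∅ := by
  refine eq_empty_of_forall_notMem fun e he => ?_
  have hI := hS.indep hSE
  rw [mem_spannedAbove] at he
  by_cases heS : e ∈ S
  · refine hI.notMem_closure_sdiff_of_mem heS (M.closure_subset_closure (fun f hf => ?_) he)
    simp only [coe_filter, Set.mem_ofPred_eq] at hf
    exact ⟨hf.1, hf.2.ne'⟩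
  · obtain ⟨C, hCsub, hC, heC⟩ := exists_isCircuit_of_mem_closure he (by simp [heS])
    have hC' : ∀ f ∈ C, f ≠ e → f ∈ S ∧ e < f := fun f hf hfe => by
      simpa [hfe] using hCsub hf
    refine hS _ (hC.isBrokenCircuit_sdiff heC fun f hf => ?_) fun f hf => (hC' f hf.1 hf.2).1
    rcases eq_or_ne f e with rfl | hfe
    · exact le_rfl
    · exact (hC' f hf hfe).2.le

/-- Adding the least element outside the closure of an NBC set keeps it NBC: a broken circuit
through that element would put it in the closure of a smaller element outside the closure. -/
lemma IsNBC.spanning {S : Set (Fin (n + 1))} (hS : M.IsNBC S) (hSE : S ⊆ M.E)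
    (hmax : ∀ e ∈ M.E, e ∉ S → ¬ M.IsNBC (insert e S)) : M.Spanning S := by
  by_contra hns
  obtain ⟨e, ⟨heE, hecl⟩, hemin⟩ := Set.exists_min_image (M.E \ M.closure S) id
    (Set.toFinite _) (Set.nonempty_of_ssubset ((not_spanning_iff_closure_ssubset hSE).1 hns))
  refine hmax e heE (fun heS => hecl (M.subset_closure S hSE heS)) ?_
  rintro _ ⟨C, m, hC, hmC, hmin, rfl⟩ hCS
  by_cases heC : e ∈ C \ {m}
  · have hme : m < e := (hmin e heC.1).lt_of_ne (Ne.symm heC.2)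
    have hmcl : m ∈ M.closure S := by
      by_contra hmcl
      exact hme.not_ge (hemin m ⟨hC.1.subset_ground hmC, hmcl⟩)
    have hCe : C \ {e} ⊆ insert m S := fun f ⟨hfC, hfe⟩ => by
      rcases eq_or_ne f m with rfl | hfm
      · exact Set.mem_insert _ _
      · exact Set.mem_insert_of_mem _
          ((Set.mem_insert_iff.1 (hCS ⟨hfC, hfm⟩)).resolve_left hfe)
    refine hecl ?_
    rw [← closure_insert_eq_of_mem_closure hmcl]
    exact M.closure_subset_closure hCe
      ((isCircuit'_iff_isCircuit.1 hC).mem_closure_sdiff_singleton_of_mem heC.1)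
  · exact hS _ ⟨C, m, hC, hmC, hmin, rfl⟩ fun f hf =>
      (Set.mem_insert_iff.1 (hCS hf)).resolve_left fun hfe => heC (hfe ▸ hf)

lemma isNBC_maximal_iff (hE : M.E = Set.univ) (S : Finset (Fin (n + 1))) :
    (M.IsNBC ↑S ∧ ∀ T : Finset (Fin (n + 1)), M.IsNBC ↑T → S ⊆ T → S = T) ↔
      M.Spanning ↑S ∧ M.spannedAbove S = ∅ := by
  have hsub : ∀ X : Set (Fin (n + 1)), X ⊆ M.E := fun X => hE ▸ Set.subset_univ X
  constructor
  · rintro ⟨hS, hmax⟩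
    refine ⟨hS.spanning (hsub _) fun e _ heS he => heS ?_, hS.spannedAbove_eq_empty (hsub _)⟩
    rw [← Finset.coe_insert] at he
    exact (hmax _ he (subset_insert e S)).symm ▸ mem_insert_self e S
  · rintro ⟨hsp, hA⟩
    refine ⟨isNBC_of_spannedAbove_eq_empty hA, fun T hT hST => coe_injective ?_⟩
    exact (isBase_of_spannedAbove_eq_empty hsp hA).eq_of_subset_indep (hT.indep (hsub _))
      (coe_subset.2 hST)

lemma charPoly_eval_zero {r : ℕ} (hE : M.E = Set.univ)
    (hrank : ∀ B, M.IsBase B → B.ncard = r + 1) :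
    (charPoly M r).eval 0 =
      ∑ S ∈ univ.filter (fun S : Finset (Fin (n + 1)) => M.Spanning ↑S), (-1 : ℚ) ^ #S := by
  rw [charPoly, Polynomial.eval_finsetSum, sum_filter, Finset.powerset_univ]
  refine sum_congr rfl fun S _ => ?_
  simp [zero_pow_eq, Nat.sub_eq_zero_iff_le, le_rk'_iff_spanning hrank (hE ▸ Set.subset_univ _)]

end NBC

end Matroid

open Finset Matroid

theorem NBC_facet_count_general {n r : ℕ} (M : Matroid (Fin (n + 1)))
    (hE : M.E = Set.univ)
    (hrank : ∀ B : Set (Fin (n + 1)), M.IsBase B → B.ncard = r + 1) :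
    ((Finset.univ.filter (fun S : Finset (Fin (n + 1)) =>
        (∀ B, M.IsBrokenCircuit B → ¬ B ⊆ (S : Set (Fin (n + 1)))) ∧
        ∀ T : Finset (Fin (n + 1)),
          (∀ B, M.IsBrokenCircuit B → ¬ B ⊆ (T : Set (Fin (n + 1)))) → S ⊆ T → S = T)).card : ℚ)
      = (-1) ^ (r + 1) * (charPoly M r).eval 0 := by
  have hcard : ∀ S ∈ univ.filter (fun S : Finset (Fin (n + 1)) =>
      M.Spanning ↑S ∧ M.spannedAbove S = ∅), (-1 : ℚ) ^ #S = (-1) ^ (r + 1) := by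
    intro S hS
    obtain ⟨hsp, hA⟩ := (mem_filter.1 hS).2
    rw [← Set.ncard_coe_finset, hrank _ (isBase_of_spannedAbove_eq_empty hsp hA)]
  rw [charPoly_eval_zero hE hrank, sum_spanning_neg_one_pow, sum_congr rfl hcard, sum_const,
    nsmul_eq_mul, mul_left_comm, ← mul_pow, neg_one_mul, neg_neg, one_pow, mul_one]
  congr 3
  ext S
  exact isNBC_maximal_iff hE S

/-- for a simple matroid of rank `r+1`, the number of facets of the no broken
circuit complex equals `(−1)^{r+1} χ_M(0)`. -/
theorem NBC_facet_count {n r : ℕ} (M : Matroid (Fin (n + 1)))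
    (hE : M.E = Set.univ)
    (hsimple : ∀ e f : Fin (n + 1), e ≠ f → M.Indep {e, f})
    (hloopless : ∀ e : Fin (n + 1), M.Indep {e})
    (hrank : ∀ B : Set (Fin (n + 1)), M.IsBase B → B.ncard = r + 1) :
    ((Finset.univ.filter (fun S : Finset (Fin (n + 1)) =>
        (∀ B, M.IsBrokenCircuit B → ¬ B ⊆ (S : Set (Fin (n + 1)))) ∧
        ∀ T : Finset (Fin (n + 1)),
          (∀ B, M.IsBrokenCircuit B → ¬ B ⊆ (T : Set (Fin (n + 1)))) → S ⊆ T → S = T)).card : ℚ)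
      = (-1) ^ (r + 1) * (charPoly M r).eval 0 :=
  NBC_facet_count_general M hE hrank
end

section
/- A set {x_a : a ∈ A} ∪ {y_b : b ∈ B} is a face of Δ^ENBC_{M,≺} if and only if B∖{0} contains no broken circuit of M and, for every a ∈ A, rk((B∖{0}) ∪ a↑) > rk((B∖{0}) ∪ (a↑ ∖ {a})). -/
open Set

section Helpers

variable {n : ℕ} {M : Matroid (Fin (n + 1))}

lemma rk'_bddAbove (S : Set (Fin (n + 1))) :
    BddAbove {k | ∃ I, I ⊆ S ∧ M.Indep I ∧ I.ncard = k} := by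
  refine ⟨n + 1, fun k hk => ?_⟩
  obtain ⟨I, -, -, rfl⟩ := hk
  have := Set.ncard_le_ncard (Set.subset_univ I) Set.finite_univ
  simpa [Set.ncard_univ] using this

lemma ncard_le_rk' {I S : Set (Fin (n + 1))} (h : I ⊆ S) (hI : M.Indep I) :
    I.ncard ≤ M.rk' S :=
  le_csSup (rk'_bddAbove S) ⟨I, h, hI, rfl⟩

lemma rk'_eq_of_basis (hE : M.E = univ) {I S : Set (Fin (n + 1))} (hI : M.IsBasis I S) :
    M.rk' S = I.ncard := by
  refine le_antisymm (csSup_le ⟨0, ∅, empty_subset _, M.empty_indep, Set.ncard_empty _⟩ ?_)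
    (ncard_le_rk' hI.subset hI.indep)
  rintro k ⟨J, hJS, hJ, rfl⟩
  obtain ⟨I', hI', hJI'⟩ := hJ.subset_isBasis_of_subset hJS (by rw [hE]; exact subset_univ _)
  have h1 : J.ncard ≤ I'.ncard := Set.ncard_le_ncard hJI' (Set.toFinite _)
  have h2 : I'.ncard = I.ncard := by
    rw [Set.ncard_def, Set.ncard_def, hI'.encard_eq_encard hI]
  omega

lemma rk'_insert_gt_iff (hE : M.E = univ) (a : Fin (n + 1)) (X : Set (Fin (n + 1))) :
    M.rk' (insert a X) > M.rk' X ↔ a ∉ M.closure X := by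
  have hXE : X ⊆ M.E := by rw [hE]; exact subset_univ _
  obtain ⟨I, hI⟩ := M.exists_isBasis X hXE
  constructor
  · intro hgt hacl
    have hIb : M.IsBasis I (insert a X) := by
      refine hI.indep.isBasis_of_subset_of_subset_closure
        (hI.subset.trans (subset_insert _ _)) ?_
      rw [hI.closure_eq_closure]
      exact insert_subset hacl (M.subset_closure X hXE)
    rw [rk'_eq_of_basis hE hI, rk'_eq_of_basis hE hIb] at hgt
    exact lt_irrefl _ hgt
  · intro hacl
    have haI : a ∉ I := fun h => hacl (M.subset_closure X hXE (hI.subset h))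
    have hclI : a ∉ M.closure I := by rw [hI.closure_eq_closure]; exact hacl
    have hind : M.Indep (insert a I) := by
      rw [hI.indep.insert_indep_iff_of_notMem haI]
      exact ⟨by rw [hE]; trivial, hclI⟩
    have hle : (insert a I).ncard ≤ M.rk' (insert a X) :=
      ncard_le_rk' (insert_subset_insert hI.subset) hind
    rw [Set.ncard_insert_of_notMem haI (Set.toFinite _)] at hle
    rw [rk'_eq_of_basis hE hI]
    omega

lemma upSet_union_eq_insert (prec : LinearOrder (Fin (n + 1))) (a : Fin (n + 1))
    (Y : Set (Fin (n + 1))) :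
    upSet prec a ∪ Y = insert a ((upSet prec a \ {a}) ∪ Y) := by
  rw [← Set.insert_union, Set.insert_diff_singleton,
    Set.insert_eq_self.mpr (show a ∈ upSet prec a from prec.le_refl a)]

lemma rk'_upSet_gt_iff (hE : M.E = univ) (prec : LinearOrder (Fin (n + 1)))
    (a : Fin (n + 1)) (Y : Set (Fin (n + 1))) :
    M.rk' (upSet prec a ∪ Y) > M.rk' ((upSet prec a \ {a}) ∪ Y) ↔
      a ∉ M.closure ((upSet prec a \ {a}) ∪ Y) := by
  rw [upSet_union_eq_insert, rk'_insert_gt_iff hE]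

lemma exists_circuit_of_dep (hE : M.E = univ) {F : Set (Fin (n + 1))} (hF : M.Dep F) :
    ∃ C, C ⊆ F ∧ M.IsCircuit' C := by
  set S := {k | ∃ D, D ⊆ F ∧ M.Dep D ∧ D.ncard = k} with hS
  have hne : S.Nonempty := ⟨F.ncard, F, subset_rfl, hF, rfl⟩
  obtain ⟨D, hDF, hD, hcard⟩ := Nat.sInf_mem hne
  refine ⟨D, hDF, hD, fun D' hD' => ?_⟩
  by_contra hind
  have hdep : M.Dep D' := Matroid.dep_iff.mpr ⟨hind, by rw [hE]; exact subset_univ _⟩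
  have hmem : D'.ncard ∈ S := ⟨D', hD'.subset.trans hDF, hdep, rfl⟩
  have hlt : D'.ncard < D.ncard := Set.ncard_lt_ncard hD' (Set.toFinite D)
  have := Nat.sInf_le hmem
  omega

lemma indep_of_no_broken_circuit (hE : M.E = univ) {F : Set (Fin (n + 1))}
    (h : ∀ Bc, M.IsBrokenCircuit Bc → ¬ Bc ⊆ F) : M.Indep F := by
  by_contra hind
  obtain ⟨C, hCF, hC⟩ := exists_circuit_of_dep hE
    (Matroid.dep_iff.mpr ⟨hind, by rw [hE]; exact subset_univ _⟩)
  have hCne : C.Nonempty := by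
    rw [Set.nonempty_iff_ne_empty]
    rintro rfl
    exact hC.1.not_indep M.empty_indep
  obtain ⟨m, hm, hmin⟩ := Set.exists_min_image C id (Set.toFinite C) hCne
  exact h (C \ {m}) ⟨C, m, hC, hm, hmin, rfl⟩ (Set.diff_subset.trans hCF)

end Helpers

/-- nonface characterization of the extended no broken circuit complex:
`{x_a : a ∈ A} ∪ {y_b : b ∈ B}` is a face of `Δ^ENBC_{M,≺}` if and only if `B∖{0}` contains
no broken circuit of `M` and, for every `a ∈ A`,
`rk((B∖{0}) ∪ a↑) > rk((B∖{0}) ∪ (a↑ ∖ {a}))`. -/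
theorem ENBC_face_characterization {n r : ℕ} (M : Matroid (Fin (n + 1)))
    (prec : LinearOrder (Fin (n + 1)))
    (hE : M.E = Set.univ)
    (hsimple : ∀ e f : Fin (n + 1), e ≠ f → M.Indep {e, f})
    (hloopless : ∀ e : Fin (n + 1), M.Indep {e})
    (hrank : ∀ B : Set (Fin (n + 1)), M.IsBase B → B.ncard = r + 1)
    (A B : Set (Fin (n + 1))) :
    ENBCface M prec ((Sum.inl '' A) ∪ (Sum.inr '' B))
      ↔ ((∀ Bc, M.IsBrokenCircuit Bc → ¬ Bc ⊆ B \ {0}) ∧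
          ∀ a ∈ A, M.rk' ((B \ {0}) ∪ upSet prec a)
            > M.rk' ((B \ {0}) ∪ (upSet prec a \ {a}))) := by
  constructor
  · rintro ⟨F, ⟨h0F, hnbc, hindF⟩, hsub⟩
    have hBF : B \ {0} ⊆ F := by
      rintro b ⟨hb, hb0⟩
      have hmem : Sum.inr b ∈ barFace M prec F := hsub (Or.inr ⟨b, hb, rfl⟩)
      simp only [barFace, Set.mem_union, Set.mem_image, Set.mem_singleton_iff] at hmem
      rcases hmem with (⟨c, hc, hcb⟩ | ⟨c, _, hcb⟩) | h0
      · rw [Sum.inr.injEq] at hcb; rwa [← hcb]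
      · exact absurd hcb (by simp)
      · rw [Sum.inr.injEq] at h0; exact absurd h0 hb0
    refine ⟨fun Bc hBc hBcB => hnbc Bc hBc (hBcB.trans hBF), fun a ha => ?_⟩
    have hmem : Sum.inl a ∈ barFace M prec F := hsub (Or.inl ⟨a, ha, rfl⟩)
    have haLF : a ∈ LSet M prec F \ F := by
      simp only [barFace, Set.mem_union, Set.mem_image, Set.mem_singleton_iff] at hmem
      rcases hmem with (⟨c, _, hcb⟩ | ⟨c, hc, hcb⟩) | h0
      · exact absurd hcb (by simp)
      · rw [Sum.inl.injEq] at hcb; rwa [← hcb]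
      · exact absurd h0 (by simp)
    obtain haF | hrkF := haLF.1
    · exact absurd haF haLF.2
    · have hcl : a ∉ M.closure ((upSet prec a \ {a}) ∪ F) :=
        (rk'_upSet_gt_iff hE prec a F).mp hrkF
      have hcl' : a ∉ M.closure ((upSet prec a \ {a}) ∪ (B \ {0})) := fun h =>
        hcl (M.closure_subset_closure (Set.union_subset_union_right _ hBF) h)
      have := (rk'_upSet_gt_iff hE prec a (B \ {0})).mpr hcl'
      rw [Set.union_comm (B \ {0}) (upSet prec a),
        Set.union_comm (B \ {0}) (upSet prec a \ {a})]
      exact this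
  · rintro ⟨hnbc, hrk⟩
    refine ⟨B \ {0}, ⟨by simp, hnbc, indep_of_no_broken_circuit hE hnbc⟩, ?_⟩
    rintro z (⟨a, ha, rfl⟩ | ⟨b, hb, rfl⟩)
    · refine Or.inl (Or.inr ⟨a, ⟨?_, ?_⟩, rfl⟩)
      · right
        rw [Set.union_comm (upSet prec a) (B \ {0}),
          Set.union_comm (upSet prec a \ {a}) (B \ {0})]
        exact hrk a ha
      · intro haB
        have hgt := hrk a ha
        have hXeq : (B \ {0}) ∪ upSet prec a = (B \ {0}) ∪ (upSet prec a \ {a}) := by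
          rw [Set.union_comm (B \ {0}) (upSet prec a), upSet_union_eq_insert,
            Set.insert_eq_self.mpr (Set.mem_union_right _ haB), Set.union_comm]
        rw [hXeq] at hgt
        exact lt_irrefl _ hgt
    · by_cases hb0 : b = (0 : Fin (n + 1))
      · exact Or.inr (by rw [hb0]; rfl)
      · exact Or.inl (Or.inl ⟨b, ⟨hb, hb0⟩, rfl⟩)
end
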